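/- One-step near-optimality bound: with the Curious Explorer iterates, poorly visited sets K_n, and intrinsic rewards r_n, fix n ≥ 0 and ε_n ≥ 0, and assume the ε_n-optimality condition sup_{π∈Π} V_{π,r_n}(μ_n) ≤ V_{π_{n+1},r_n}(μ_n) + ε_n. Then (1/2) · sup_{π∈Π} Σ_{s∈K_n} d_{δ_{s₀}}^π(s) ≤ Σ_{s∈K_n} d_{μ_n}^{π_{n+1}}(s) + ε_n. -/

import Mathlib

open Finset

variable {S A : Type*} [Fintype S] [Fintype A] [Nonempty S] [Nonempty A] [DecidableEq S]

/-- `ρ` is a probability distribution on the finite type `S`. -/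
def IsDist {S : Type*} [Fintype S] (ρ : S → ℝ) : Prop :=
  (∀ s, 0 ≤ ρ s) ∧ ∑ s, ρ s = 1

/-- `π` is a stationary policy: a probability distribution over actions at each state. -/
def IsPolicy (π : S → A → ℝ) : Prop := ∀ s, IsDist (π s)

/-- `P` is a transition kernel: `P s a` is a distribution on next states. -/
def IsKernel (P : S → A → S → ℝ) : Prop := ∀ s a, IsDist (P s a)

/-- The induced state-transition kernel `K_π(s'|s) = Σ_a π(a|s) P(s'|s,a)`. -/
def kpol (P : S → A → S → ℝ) (π : S → A → ℝ) (s s' : S) : ℝ :=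
  ∑ a, π s a * P s a s'

/-- One step of the Markov chain with kernel `K_π`: `ρ ↦ ρ K_π`. -/
def step (P : S → A → S → ℝ) (π : S → A → ℝ) (ρ : S → ℝ) : S → ℝ :=
  fun s' => ∑ s, ρ s * kpol P π s s'

/-- `ρ K_π^t`: the state distribution after `t` steps started from `ρ`. -/
def iterDist (P : S → A → S → ℝ) (π : S → A → ℝ) (ρ : S → ℝ) (t : ℕ) : S → ℝ :=
  (step P π)^[t] ρ

/-- The discounted state visitation distribution
`d_ρ^π(s) = (1-γ) Σ_t γ^t (ρ K_π^t)(s)`. -/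
noncomputable def dvisit (P : S → A → S → ℝ) (γ : ℝ) (π : S → A → ℝ)
    (ρ : S → ℝ) (s : S) : ℝ :=
  (1 - γ) * ∑' t : ℕ, γ ^ t * iterDist P π ρ t s

/-- The normalized value function
`V_{π,r}(ρ) = (1-γ) Σ_t γ^t Σ_{s,a} (ρ K_π^t)(s) π(a|s) r(s,a)`. -/
noncomputable def value (P : S → A → S → ℝ) (γ : ℝ) (π : S → A → ℝ)
    (r : S → A → ℝ) (ρ : S → ℝ) : ℝ :=
  (1 - γ) * ∑' t : ℕ, γ ^ t * ∑ s, ∑ a, iterDist P π ρ t s * π s a * r s a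

/-- The Dirac distribution at `s₀`. -/
def dirac (s₀ : S) : S → ℝ := fun s => if s = s₀ then 1 else 0

/-- Curious Explorer reset models: `ceMu P γ πseq s₀ 0 = μ₋₁ = δ_{s₀}` and,
for `n ≥ 0`, `ceMu P γ πseq s₀ (n+1) = μ_n = ½ D_n + ½ δ_{s₀}` where
`D_n = d_{μ_{n-1}}^{π_n}`. -/
noncomputable def ceMu (P : S → A → S → ℝ) (γ : ℝ) (πseq : ℕ → S → A → ℝ)
    (s₀ : S) : ℕ → S → ℝ
  | 0 => dirac s₀
  | n + 1 => fun s =>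
      (1 / 2) * dvisit P γ (πseq n) (ceMu P γ πseq s₀ n) s + (1 / 2) * dirac s₀ s

/-- `D_n = d_{μ_{n-1}}^{π_n}`. -/
noncomputable def ceD (P : S → A → S → ℝ) (γ : ℝ) (πseq : ℕ → S → A → ℝ)
    (s₀ : S) (n : ℕ) : S → ℝ :=
  dvisit P γ (πseq n) (ceMu P γ πseq s₀ n)

open scoped Classical in
/-- The set of poorly visited states `K_n = { s : Σ_{i=0}^n D_i(s) ≤ β_n }`. -/
noncomputable def ceK (P : S → A → S → ℝ) (γ : ℝ) (πseq : ℕ → S → A → ℝ)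
    (s₀ : S) (β : ℕ → ℝ) (n : ℕ) : Finset S :=
  Finset.univ.filter fun s => ∑ i ∈ Finset.range (n + 1), ceD P γ πseq s₀ i s ≤ β n

/-- The intrinsic reward `r_n(s,a) = 1_{s ∈ K_n}`. -/
noncomputable def ceR (P : S → A → S → ℝ) (γ : ℝ) (πseq : ℕ → S → A → ℝ)
    (s₀ : S) (β : ℕ → ℝ) (n : ℕ) (s : S) (_a : A) : ℝ :=
  if s ∈ ceK P γ πseq s₀ β n then 1 else 0

open scoped Classical in
/-- `β̃(s) = β_{ñ(s)}` where `ñ(s) = max { n ≤ N : s ∈ K_n }` if `s` lies in some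
`K_n` with `n ≤ N`, and `β̃(s) = 0` otherwise. -/
noncomputable def ceBetaTilde (P : S → A → S → ℝ) (γ : ℝ) (πseq : ℕ → S → A → ℝ)
    (s₀ : S) (β : ℕ → ℝ) (N : ℕ) (s : S) : ℝ :=
  if ∃ n ≤ N, s ∈ ceK P γ πseq s₀ β n then
    β (Nat.findGreatest (fun n => s ∈ ceK P γ πseq s₀ β n) N)
  else 0

/-!
For the indicator reward `r_n` of `K_n`, the value `V_{π,r_n}(μ)` is the visitation mass
`d_μ^π(K_n)`. The visitation distribution is linear and nonnegative in the starting distribution,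
and `μ_n` gives weight `½` to `δ_{s₀}`, so `½ d_{δ_{s₀}}^π(K_n) ≤ d_{μ_n}^π(K_n) = V_{π,r_n}(μ_n)`
for every policy `π`; the `ε_n`-optimality of `π_{n+1}` bounds the right side.
-/

section Visitation

-- Fresh `S A`, so that the global `[Nonempty S] [Nonempty A] [DecidableEq S]` stay out of these lemmas.
variable {S A : Type*} [Fintype S] [Fintype A] {P : S → A → S → ℝ} {π : S → A → ℝ}
  {γ : ℝ} {ρ ρ₁ ρ₂ : S → ℝ}

lemma IsDist.sum_le_one (hρ : IsDist ρ) (F : Finset S) : ∑ s ∈ F, ρ s ≤ 1 :=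
  hρ.2 ▸ Finset.sum_le_sum_of_subset_of_nonneg (Finset.subset_univ F) fun s _ _ => hρ.1 s

lemma IsDist.le_one (hρ : IsDist ρ) (s : S) : ρ s ≤ 1 := by
  simpa using hρ.sum_le_one {s}

lemma IsDist.mix (h₁ : IsDist ρ₁) (h₂ : IsDist ρ₂) {a b : ℝ} (ha : 0 ≤ a) (hb : 0 ≤ b)
    (hab : a + b = 1) : IsDist fun s => a * ρ₁ s + b * ρ₂ s :=
  ⟨fun s => by have := h₁.1 s; have := h₂.1 s; positivity, by
    rw [Finset.sum_add_distrib, ← Finset.mul_sum, ← Finset.mul_sum, h₁.2, h₂.2, mul_one,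
      mul_one, hab]⟩

lemma isDist_dirac [DecidableEq S] (s₀ : S) : IsDist (dirac s₀ : S → ℝ) :=
  ⟨fun s => by unfold dirac; positivity, by simp [dirac]⟩

instance [Nonempty A] : Nonempty {π : S → A → ℝ // IsPolicy π} :=
  ⟨⟨fun _ _ => (Fintype.card A : ℝ)⁻¹, fun _ => ⟨fun _ => by positivity, by simp⟩⟩⟩

lemma kpol_nonneg (hP : IsKernel P) (hπ : IsPolicy π) (s s' : S) : 0 ≤ kpol P π s s' :=
  Finset.sum_nonneg fun a _ => mul_nonneg ((hπ s).1 a) ((hP s a).1 s')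

lemma sum_kpol_eq_one (hP : IsKernel P) (hπ : IsPolicy π) (s : S) :
    ∑ s', kpol P π s s' = 1 := by
  simp only [kpol]
  rw [Finset.sum_comm]
  simp only [← Finset.mul_sum, fun a => (hP s a).2, mul_one, (hπ s).2]

lemma IsDist.step (hP : IsKernel P) (hπ : IsPolicy π) (hρ : IsDist ρ) :
    IsDist (step P π ρ) := by
  refine ⟨fun s' => Finset.sum_nonneg fun s _ => mul_nonneg (hρ.1 s) (kpol_nonneg hP hπ s s'),
    ?_⟩
  simp only [_root_.step]
  rw [Finset.sum_comm]
  simp only [← Finset.mul_sum, sum_kpol_eq_one hP hπ, mul_one, hρ.2]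

lemma iterDist_succ (t : ℕ) : iterDist P π ρ (t + 1) = step P π (iterDist P π ρ t) :=
  Function.iterate_succ_apply' _ _ _

lemma IsDist.iterDist (hP : IsKernel P) (hπ : IsPolicy π) (hρ : IsDist ρ) (t : ℕ) :
    IsDist (iterDist P π ρ t) := by
  induction t with
  | zero => exact hρ
  | succ t ih => rw [iterDist_succ]; exact ih.step hP hπ

lemma step_mix (a b : ℝ) :
    step P π (fun s => a * ρ₁ s + b * ρ₂ s) = fun s => a * step P π ρ₁ s + b * step P π ρ₂ s := by
  funext s'
  simp only [step, Finset.mul_sum, ← Finset.sum_add_distrib]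
  exact Finset.sum_congr rfl fun s _ => by ring

lemma iterDist_mix (a b : ℝ) (t : ℕ) :
    iterDist P π (fun s => a * ρ₁ s + b * ρ₂ s) t =
      fun s => a * iterDist P π ρ₁ t s + b * iterDist P π ρ₂ t s := by
  induction t with
  | zero => rfl
  | succ t ih => rw [iterDist_succ, ih, step_mix, iterDist_succ, iterDist_succ]

lemma summable_pow_mul_iterDist (hγ0 : 0 ≤ γ) (hγ1 : γ < 1) (hP : IsKernel P)
    (hπ : IsPolicy π) (hρ : IsDist ρ) (s : S) :
    Summable fun t => γ ^ t * iterDist P π ρ t s :=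
  (summable_geometric_of_lt_one hγ0 hγ1).of_nonneg_of_le
    (fun t => mul_nonneg (pow_nonneg hγ0 t) ((hρ.iterDist hP hπ t).1 s))
    fun t => mul_le_of_le_one_right (pow_nonneg hγ0 t) ((hρ.iterDist hP hπ t).le_one s)

lemma sum_dvisit_eq (hγ0 : 0 ≤ γ) (hγ1 : γ < 1) (hP : IsKernel P) (hπ : IsPolicy π)
    (hρ : IsDist ρ) (F : Finset S) :
    ∑ s ∈ F, dvisit P γ π ρ s = (1 - γ) * ∑' t, γ ^ t * ∑ s ∈ F, iterDist P π ρ t s := by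
  simp only [dvisit, ← Finset.mul_sum]
  rw [← Summable.tsum_finsetSum fun s _ => summable_pow_mul_iterDist hγ0 hγ1 hP hπ hρ s]
  simp only [Finset.mul_sum]

lemma IsDist.dvisit (hγ0 : 0 ≤ γ) (hγ1 : γ < 1) (hP : IsKernel P) (hπ : IsPolicy π)
    (hρ : IsDist ρ) : IsDist (dvisit P γ π ρ) := by
  refine ⟨fun s => mul_nonneg (by linarith) (tsum_nonneg fun t =>
    mul_nonneg (pow_nonneg hγ0 t) ((hρ.iterDist hP hπ t).1 s)), ?_⟩
  simp only [sum_dvisit_eq hγ0 hγ1 hP hπ hρ, (hρ.iterDist hP hπ _).2, mul_one,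
    tsum_geometric_of_lt_one hγ0 hγ1]
  exact mul_inv_cancel₀ (by linarith)

lemma dvisit_mix (hγ0 : 0 ≤ γ) (hγ1 : γ < 1) (hP : IsKernel P) (hπ : IsPolicy π)
    (h₁ : IsDist ρ₁) (h₂ : IsDist ρ₂) (a b : ℝ) (s : S) :
    dvisit P γ π (fun s => a * ρ₁ s + b * ρ₂ s) s =
      a * dvisit P γ π ρ₁ s + b * dvisit P γ π ρ₂ s := by
  have hsplit : ∀ t, γ ^ t * iterDist P π (fun s => a * ρ₁ s + b * ρ₂ s) t s =
      a * (γ ^ t * iterDist P π ρ₁ t s) + b * (γ ^ t * iterDist P π ρ₂ t s) := fun t => by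
    rw [iterDist_mix]; ring
  simp only [dvisit, hsplit]
  rw [Summable.tsum_add ((summable_pow_mul_iterDist hγ0 hγ1 hP hπ h₁ s).mul_left a)
    ((summable_pow_mul_iterDist hγ0 hγ1 hP hπ h₂ s).mul_left b), tsum_mul_left, tsum_mul_left]
  ring

lemma mul_sum_dvisit_le_sum_dvisit_mix (hγ0 : 0 ≤ γ) (hγ1 : γ < 1) (hP : IsKernel P)
    (hπ : IsPolicy π) (h₁ : IsDist ρ₁) (h₂ : IsDist ρ₂) {a : ℝ} (ha : 0 ≤ a) (b : ℝ)
    (F : Finset S) :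
    b * ∑ s ∈ F, dvisit P γ π ρ₂ s ≤ ∑ s ∈ F, dvisit P γ π (fun s => a * ρ₁ s + b * ρ₂ s) s := by
  have hD₁ : 0 ≤ ∑ s ∈ F, dvisit P γ π ρ₁ s :=
    Finset.sum_nonneg fun s _ => (h₁.dvisit hγ0 hγ1 hP hπ).1 s
  simp only [dvisit_mix hγ0 hγ1 hP hπ h₁ h₂, Finset.sum_add_distrib, ← Finset.mul_sum]
  nlinarith

lemma value_indicator_eq_sum_dvisit (hγ0 : 0 ≤ γ) (hγ1 : γ < 1) (hP : IsKernel P)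
    (hπ : IsPolicy π) (hρ : IsDist ρ) [DecidableEq S] (K : Finset S) :
    value P γ π (fun s _ => if s ∈ K then 1 else 0) ρ = ∑ s ∈ K, dvisit P γ π ρ s := by
  have hreward : ∀ t s, ∑ a, iterDist P π ρ t s * π s a * (if s ∈ K then 1 else 0) =
      if s ∈ K then iterDist P π ρ t s else 0 := fun t s => by
    split_ifs
    · simp only [mul_one, ← Finset.mul_sum, (hπ s).2]
    · simp
  simp only [value, sum_dvisit_eq hγ0 hγ1 hP hπ hρ, hreward, Finset.sum_ite_mem,
    Finset.univ_inter]

end Visitation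

section CuriousExplorer

variable {S A : Type*} [Fintype S] [Fintype A] [DecidableEq S] {P : S → A → S → ℝ} {γ : ℝ}
  {πseq : ℕ → S → A → ℝ}

lemma isDist_ceMu (hγ0 : 0 ≤ γ) (hγ1 : γ < 1) (hP : IsKernel P)
    (hπseq : ∀ k, IsPolicy (πseq k)) (s₀ : S) (m : ℕ) : IsDist (ceMu P γ πseq s₀ m) := by
  induction m with
  | zero => exact isDist_dirac s₀
  | succ m ih =>
    exact (ih.dvisit hγ0 hγ1 hP (hπseq m)).mix (isDist_dirac s₀) (by norm_num) (by norm_num)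
      (by norm_num)

lemma half_sum_dvisit_dirac_le_sum_dvisit_ceMu (hγ0 : 0 ≤ γ) (hγ1 : γ < 1) (hP : IsKernel P)
    (hπseq : ∀ k, IsPolicy (πseq k)) {π : S → A → ℝ} (hπ : IsPolicy π) (s₀ : S) (n : ℕ)
    (F : Finset S) :
    1 / 2 * ∑ s ∈ F, dvisit P γ π (dirac s₀) s ≤
      ∑ s ∈ F, dvisit P γ π (ceMu P γ πseq s₀ (n + 1)) s :=
  mul_sum_dvisit_le_sum_dvisit_mix hγ0 hγ1 hP hπ
    ((isDist_ceMu hγ0 hγ1 hP hπseq s₀ n).dvisit hγ0 hγ1 hP (hπseq n)) (isDist_dirac s₀)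
    (by norm_num) _ F

end CuriousExplorer

theorem stmt10_ce_one_step_general
    (P : S → A → S → ℝ) (γ : ℝ) (hP : IsKernel P) (hγ0 : 0 ≤ γ) (hγ1 : γ < 1)
    (s₀ : S) (πseq : ℕ → S → A → ℝ) (hπseq : ∀ k, IsPolicy (πseq k))
    (β : ℕ → ℝ) (n : ℕ) (εn : ℝ)
    (hopt : (⨆ π : {π' : S → A → ℝ // IsPolicy π'},
        value P γ π.1 (ceR P γ πseq s₀ β n) (ceMu P γ πseq s₀ (n + 1))) ≤
      value P γ (πseq (n + 1)) (ceR P γ πseq s₀ β n) (ceMu P γ πseq s₀ (n + 1)) + εn) :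
    (1 / 2) * (⨆ π : {π' : S → A → ℝ // IsPolicy π'},
        ∑ s ∈ ceK P γ πseq s₀ β n, dvisit P γ π.1 (dirac s₀) s) ≤
      (∑ s ∈ ceK P γ πseq s₀ β n,
        dvisit P γ (πseq (n + 1)) (ceMu P γ πseq s₀ (n + 1)) s) + εn := by
  have hμ := isDist_ceMu hγ0 hγ1 hP hπseq s₀ (n + 1)
  have hvalue : ∀ {π}, IsPolicy π → value P γ π (ceR P γ πseq s₀ β n) (ceMu P γ πseq s₀ (n + 1)) =
      ∑ s ∈ ceK P γ πseq s₀ β n, dvisit P γ π (ceMu P γ πseq s₀ (n + 1)) s :=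
    fun hπ => value_indicator_eq_sum_dvisit hγ0 hγ1 hP hπ hμ _
  have hbdd : BddAbove (Set.range fun π : {π' : S → A → ℝ // IsPolicy π'} =>
      value P γ π.1 (ceR P γ πseq s₀ β n) (ceMu P γ πseq s₀ (n + 1))) := by
    refine ⟨1, ?_⟩
    rintro _ ⟨π, rfl⟩
    simpa only [hvalue π.2] using (hμ.dvisit hγ0 hγ1 hP π.2).sum_le_one _
  rw [Real.mul_iSup_of_nonneg (by norm_num)]
  refine ciSup_le fun π => ?_
  calc 1 / 2 * ∑ s ∈ ceK P γ πseq s₀ β n, dvisit P γ π.1 (dirac s₀) s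
      ≤ ∑ s ∈ ceK P γ πseq s₀ β n, dvisit P γ π.1 (ceMu P γ πseq s₀ (n + 1)) s :=
        half_sum_dvisit_dirac_le_sum_dvisit_ceMu hγ0 hγ1 hP hπseq π.2 s₀ n _
    _ = value P γ π.1 (ceR P γ πseq s₀ β n) (ceMu P γ πseq s₀ (n + 1)) := (hvalue π.2).symm
    _ ≤ _ := le_ciSup hbdd π
    _ ≤ _ := hopt
    _ = _ := by rw [hvalue (hπseq (n + 1))]

/-- one-step near-optimality bound: if `π_{n+1}` is `ε_n`-optimal
for the intrinsic reward `r_n` with starting distribution `μ_n`, then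
`½ sup_{π∈Π} Σ_{s∈K_n} d_{δ_{s₀}}^π(s) ≤ Σ_{s∈K_n} d_{μ_n}^{π_{n+1}}(s) + ε_n`. -/
theorem stmt10_ce_one_step
    (P : S → A → S → ℝ) (γ : ℝ) (hP : IsKernel P) (hγ0 : 0 ≤ γ) (hγ1 : γ < 1)
    (s₀ : S) (πseq : ℕ → S → A → ℝ) (hπseq : ∀ k, IsPolicy (πseq k))
    (β : ℕ → ℝ) (hβ : ∀ n, 0 ≤ β n) (n : ℕ) (εn : ℝ) (hεn : 0 ≤ εn)
    (hopt : (⨆ π : {π' : S → A → ℝ // IsPolicy π'},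
        value P γ π.1 (ceR P γ πseq s₀ β n) (ceMu P γ πseq s₀ (n + 1))) ≤
      value P γ (πseq (n + 1)) (ceR P γ πseq s₀ β n) (ceMu P γ πseq s₀ (n + 1)) + εn) :
    (1 / 2) * (⨆ π : {π' : S → A → ℝ // IsPolicy π'},
        ∑ s ∈ ceK P γ πseq s₀ β n, dvisit P γ π.1 (dirac s₀) s) ≤
      (∑ s ∈ ceK P γ πseq s₀ β n,
        dvisit P γ (πseq (n + 1)) (ceMu P γ πseq s₀ (n + 1)) s) + εn :=
  stmt10_ce_one_step_general P γ hP hγ0 hγ1 s₀ πseq hπseq β n εn hopt
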